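/- For every integer k ≥ 4, the number r_k^{MSO;tr} of equivalence classes of finite rooted trees under ≡_k^{MSO;tr} satisfies r_k^{MSO;tr} ≤ T(k + 2 + log*(k)). -/

import Mathlib

/-!
To a tree with a valuation of `n` vertex and `m` set variables assign its depth-`j` Hintikka
type: its atomic type (which terms coincide, which is the parent of which, which sets contain
them), together with the sets of depth-`(j - 1)` types realised by extending the valuation by
one more vertex, resp. one more set. Trees of equal depth-`k` type satisfy the same sentences of
depth `≤ k`, so the classes inject into the depth-`k` types of sentences. The number of types
obeys `c (j + 1) ≤ a * 2 ^ c j * 2 ^ c j`, so each quantifier adds one level to the tower. The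
atomic types are counted with coincidences recorded by first occurrence: for `k = 4` this gives at
most `30240` of them, few enough to fit under `tower (2 + logStar 4) = 2 ^ 16`.
-/

/-- The tower function: `tower 1 = 2` and `tower (s+1) = 2 ^ tower s`. -/
def tower : ℕ → ℕ
  | 0 => 1
  | s + 1 => 2 ^ tower s

/-- `logStar k = min { i | tower i ≥ k }`. -/
noncomputable def logStar (k : ℕ) : ℕ := sInf {i : ℕ | k ≤ tower i}

/-- A finite rooted tree: a tree on `Fin n` together with a distinguished root. -/
structure FinRootedTree where
  n : ℕ
  graph : SimpleGraph (Fin n)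
  isTree : graph.IsTree
  root : Fin n

/-- The parent–child relation of a rooted tree: `x` is the parent of `y`. -/
def FinRootedTree.parent (T : FinRootedTree) (x y : Fin T.n) : Prop :=
  T.graph.Adj x y ∧ T.graph.dist T.root y = T.graph.dist T.root x + 1

/-- MSO formulas in the language of rooted trees (parent–child relation `P`,
equality, and root constant, interpreted as `none`) with `n` free vertex
variables and `m` free set variables. -/
inductive TreeForm : ℕ → ℕ → Type
  | par {n m : ℕ} : Option (Fin n) → Option (Fin n) → TreeForm n m
  | eq  {n m : ℕ} : Option (Fin n) → Option (Fin n) → TreeForm n m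
  | mem {n m : ℕ} : Option (Fin n) → Fin m → TreeForm n m
  | not {n m : ℕ} : TreeForm n m → TreeForm n m
  | and {n m : ℕ} : TreeForm n m → TreeForm n m → TreeForm n m
  | allV {n m : ℕ} : TreeForm (n + 1) m → TreeForm n m
  | allS {n m : ℕ} : TreeForm n (m + 1) → TreeForm n m

/-- Quantifier depth of an MSO rooted-tree formula. -/
def TreeForm.depth : ∀ {n m : ℕ}, TreeForm n m → ℕ
  | _, _, .par _ _ => 0
  | _, _, .eq _ _ => 0
  | _, _, .mem _ _ => 0
  | _, _, .not φ => φ.depth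
  | _, _, .and φ ψ => max φ.depth ψ.depth
  | _, _, .allV φ => φ.depth + 1
  | _, _, .allS φ => φ.depth + 1

/-- Interpretation of a term (a variable or the root constant). -/
def interpTerm {V : Type} (r : V) {n : ℕ} (v : Fin n → V) : Option (Fin n) → V
  | some i => v i
  | none => r

/-- Satisfaction of an MSO rooted-tree formula on a finite rooted tree. -/
def TreeForm.Sat (T : FinRootedTree) :
    ∀ {n m : ℕ}, TreeForm n m → (Fin n → Fin T.n) → (Fin m → Set (Fin T.n)) → Prop
  | _, _, .par a b, v, _ => T.parent (interpTerm T.root v a) (interpTerm T.root v b)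
  | _, _, .eq a b, v, _ => interpTerm T.root v a = interpTerm T.root v b
  | _, _, .mem a j, v, s => interpTerm T.root v a ∈ s j
  | _, _, .not φ, v, s => ¬ TreeForm.Sat T φ v s
  | _, _, .and φ ψ, v, s => TreeForm.Sat T φ v s ∧ TreeForm.Sat T ψ v s
  | _, _, .allV φ, v, s => ∀ x, TreeForm.Sat T φ (Fin.snoc v x) s
  | _, _, .allS φ, v, s => ∀ X, TreeForm.Sat T φ v (Fin.snoc s X)

/-- `T ≡ₖ^{MSO;tr} T'`: the two rooted trees satisfy the same MSO sentences of
quantifier depth at most `k`. -/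
def MSOTreeEquiv (k : ℕ) (T T' : FinRootedTree) : Prop :=
  ∀ φ : TreeForm 0 0, φ.depth ≤ k →
    (TreeForm.Sat T φ (fun i => i.elim0) (fun i => i.elim0) ↔
      TreeForm.Sat T' φ (fun i => i.elim0) (fun i => i.elim0))

def msoTreeSetoid (k : ℕ) : Setoid FinRootedTree where
  r := MSOTreeEquiv k
  iseqv := ⟨fun _ _ _ => Iff.rfl, fun h φ hφ => (h φ hφ).symm,
    fun h1 h2 φ hφ => (h1 φ hφ).trans (h2 φ hφ)⟩

/-- The set of `≡ₖ^{MSO;tr}`-equivalence classes of finite rooted trees. -/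
def MSOTreeClasses (k : ℕ) : Type := Quotient (msoTreeSetoid k)

lemma tower_strictMono : StrictMono tower :=
  strictMono_nat_of_lt_succ fun _ => Nat.lt_two_pow_self

lemma logStar_le_iff {k i : ℕ} : logStar k ≤ i ↔ k ≤ tower i := by
  refine ⟨fun h => ?_, fun h => Nat.sInf_le h⟩
  have hk : logStar k ∈ {i | k ≤ tower i} := Nat.sInf_mem ⟨k, tower_strictMono.id_le k⟩
  exact hk.trans (tower_strictMono.monotone h)

lemma lt_logStar_iff {k i : ℕ} : i < logStar k ↔ tower i < k := by
  simpa only [not_le] using logStar_le_iff.not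

lemma logStar_four : logStar 4 = 2 :=
  le_antisymm (logStar_le_iff.mpr (by decide)) (lt_logStar_iff.mpr (by decide))

lemma three_le_logStar {k : ℕ} (hk : 5 ≤ k) : 3 ≤ logStar k :=
  lt_logStar_iff.mpr (by simp only [tower]; omega)

lemma FinRootedTree.parent_unique (T : FinRootedTree) {x x' y : Fin T.n}
    (hx : T.parent x y) (hx' : T.parent x' y) : x = x' := by
  have hT := T.isTree.isAcyclic
  obtain ⟨p, hp, -⟩ := (T.isTree.connected T.root y).exists_path_of_dist
  have eq_penultimate : ∀ z, T.parent z y → z = p.penultimate := by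
    rintro z ⟨hzy, hdist⟩
    obtain ⟨q, hq, hqlen⟩ := (T.isTree.connected T.root z).exists_path_of_dist
    have hy : y ∉ q.support := fun hy => by
      have := SimpleGraph.dist_le (q.takeUntil y hy)
      have := q.length_takeUntil_le_length hy
      omega
    exact hT.eq_penultimate_of_adj_end hp hzy.symm
      (hT.mem_support_of_ne_mem_support_of_adj_of_isPath hp hq hzy.symm hy)
  rw [eq_penultimate x hx, eq_penultimate x' hx']

/-- Entry `t` is `inl i` if term `t` denotes the same vertex as the earlier term `i`; otherwise
it records the index of some term denoting the parent of `t` (if any) and the set variables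
containing `t`. -/
abbrev AtomCode (N m : ℕ) : Type := (t : Fin N) → Fin t ⊕ Option (Fin N) × Set (Fin m)

namespace AtomCode

variable {N m : ℕ}

def rep (e : AtomCode N m) (t : Fin N) : Fin N :=
  match e t with
  | .inl i => Fin.castLE t.isLt.le i
  | .inr _ => t

def Mem (e : AtomCode N m) (a : Fin N) (j : Fin m) : Prop :=
  ∃ c ∈ (e (e.rep a)).getRight?, j ∈ c.2

def Rel (e : AtomCode N m) (a b : Fin N) : Prop :=
  ∃ c ∈ (e (e.rep b)).getRight?, ∃ p ∈ c.1, e.rep p = e.rep a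

end AtomCode

section Encoding

open scoped Classical

variable {V : Type*} {N m : ℕ}

noncomputable def firstEq (w : Fin N → V) (t : Fin N) : Fin N :=
  Fin.find (fun i => w i = w t) ⟨t, rfl⟩

lemma apply_firstEq (w : Fin N → V) (t : Fin N) : w (firstEq w t) = w t :=
  Fin.find_spec (p := fun i => w i = w t) _

lemma firstEq_le (w : Fin N → V) (t : Fin N) : firstEq w t ≤ t :=
  Fin.find_le_of_pos _ rfl

lemma firstEq_eq_firstEq_iff {w : Fin N → V} {a b : Fin N} :
    firstEq w a = firstEq w b ↔ w a = w b := by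
  refine ⟨fun h => ?_, fun h => by simp only [firstEq, h]⟩
  simpa only [apply_firstEq] using congrArg w h

lemma firstEq_firstEq (w : Fin N → V) (t : Fin N) : firstEq w (firstEq w t) = firstEq w t :=
  firstEq_eq_firstEq_iff.mpr (apply_firstEq w t)

noncomputable def parentIdx (P : V → V → Prop) (w : Fin N → V) (t : Fin N) : Option (Fin N) :=
  if h : ∃ p, P (w p) (w t) then some h.choose else none

noncomputable def atomCode (P : V → V → Prop) (w : Fin N → V) (s : Fin m → Set V) :
    AtomCode N m := fun t =>
  if h : firstEq w t < t then .inl ⟨firstEq w t, h⟩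
  else .inr (parentIdx P w t, {j | w t ∈ s j})

variable (P : V → V → Prop) (w : Fin N → V) (s : Fin m → Set V)

lemma rep_atomCode (t : Fin N) : (atomCode P w s).rep t = firstEq w t := by
  unfold AtomCode.rep atomCode
  split_ifs with h
  · rfl
  · exact le_antisymm (not_lt.mp h) (firstEq_le w t)

lemma atomCode_firstEq (t : Fin N) :
    atomCode P w s (firstEq w t) = .inr (parentIdx P w t, {j | w t ∈ s j}) := by
  simp only [atomCode, firstEq_firstEq, lt_irrefl, dite_false, apply_firstEq, parentIdx]

lemma eq_iff_rep_atomCode_eq (a b : Fin N) :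
    w a = w b ↔ (atomCode P w s).rep a = (atomCode P w s).rep b := by
  rw [rep_atomCode, rep_atomCode, firstEq_eq_firstEq_iff]

lemma mem_iff_atomCode_mem (a : Fin N) (j : Fin m) :
    w a ∈ s j ↔ (atomCode P w s).Mem a j := by
  rw [AtomCode.Mem, rep_atomCode, atomCode_firstEq]
  simp

lemma rel_iff_atomCode_rel (hP : ∀ x x' y, P x y → P x' y → x = x') (a b : Fin N) :
    P (w a) (w b) ↔ (atomCode P w s).Rel a b := by
  rw [AtomCode.Rel, rep_atomCode, atomCode_firstEq]
  simp only [parentIdx, Sum.getRight?_inr, Option.mem_def, Option.some.injEq, rep_atomCode,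
    firstEq_eq_firstEq_iff, exists_eq_left', Option.dite_none_right_eq_some, exists_exists_eq_and]
  refine ⟨fun h => ?_, fun ⟨hex, heq⟩ => heq ▸ hex.choose_spec⟩
  have hex : ∃ p, P (w p) (w b) := ⟨a, h⟩
  exact ⟨hex, hP _ _ _ hex.choose_spec h⟩

end Encoding

def FinRootedTree.termVal (T : FinRootedTree) {n : ℕ} (v : Fin n → Fin T.n) :
    Fin (n + 1) → Fin T.n :=
  Fin.cons T.root v

lemma FinRootedTree.interpTerm_eq_termVal (T : FinRootedTree) {n : ℕ} (v : Fin n → Fin T.n)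
    (o : Option (Fin n)) : interpTerm T.root v o = T.termVal v ((finSuccEquiv n).symm o) := by
  cases o <;> rfl

def HintikkaType : ℕ → ℕ → ℕ → Type
  | 0, n, m => AtomCode (n + 1) m
  | j + 1, n, m =>
    AtomCode (n + 1) m × Set (HintikkaType j (n + 1) m) × Set (HintikkaType j n (m + 1))

noncomputable def hintikkaType : (j : ℕ) → {n m : ℕ} → (T : FinRootedTree) →
    (Fin n → Fin T.n) → (Fin m → Set (Fin T.n)) → HintikkaType j n m
  | 0, _, _, T, v, s => atomCode T.parent (T.termVal v) s
  | j + 1, _, _, T, v, s =>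
    (atomCode T.parent (T.termVal v) s,
      Set.range fun x => hintikkaType j T (Fin.snoc v x) s,
      Set.range fun X => hintikkaType j T v (Fin.snoc s X))

lemma forall_congr_of_range_eq {α β : Sort*} {γ : Type*} {f : α → γ} {g : β → γ}
    {p : α → Prop} {q : β → Prop} (hfg : Set.range f = Set.range g)
    (hpq : ∀ a b, f a = g b → (p a ↔ q b)) : (∀ a, p a) ↔ ∀ b, q b := by
  constructor
  · intro hp b
    obtain ⟨a, ha⟩ : g b ∈ Set.range f := hfg ▸ ⟨b, rfl⟩
    exact (hpq a b ha).mp (hp a)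
  · intro hq a
    obtain ⟨b, hb⟩ : f a ∈ Set.range g := hfg ▸ ⟨a, rfl⟩
    exact (hpq a b hb.symm).mpr (hq b)

section Transfer

variable {T T' : FinRootedTree}

lemma atomCode_eq_of_hintikkaType_eq {j n m : ℕ} {v : Fin n → Fin T.n}
    {s : Fin m → Set (Fin T.n)} {v' : Fin n → Fin T'.n} {s' : Fin m → Set (Fin T'.n)}
    (h : hintikkaType j T v s = hintikkaType j T' v' s') :
    atomCode T.parent (T.termVal v) s = atomCode T'.parent (T'.termVal v') s' := by
  cases j with
  | zero => exact h
  | succ j => exact congrArg Prod.fst h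

lemma TreeForm.sat_iff_of_hintikkaType_eq {n m : ℕ} (φ : TreeForm n m) {j : ℕ}
    (hφ : φ.depth ≤ j) {v : Fin n → Fin T.n} {s : Fin m → Set (Fin T.n)}
    {v' : Fin n → Fin T'.n} {s' : Fin m → Set (Fin T'.n)}
    (h : hintikkaType j T v s = hintikkaType j T' v' s') : φ.Sat T v s ↔ φ.Sat T' v' s' := by
  induction φ generalizing j with
  | par a b =>
    have he := atomCode_eq_of_hintikkaType_eq h
    simp only [TreeForm.Sat, FinRootedTree.interpTerm_eq_termVal]
    rw [rel_iff_atomCode_rel T.parent _ s (fun _ _ _ => T.parent_unique),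
      rel_iff_atomCode_rel T'.parent _ s' (fun _ _ _ => T'.parent_unique), he]
  | eq a b =>
    have he := atomCode_eq_of_hintikkaType_eq h
    simp only [TreeForm.Sat, FinRootedTree.interpTerm_eq_termVal]
    rw [eq_iff_rep_atomCode_eq T.parent _ s, eq_iff_rep_atomCode_eq T'.parent _ s', he]
  | mem a i =>
    have he := atomCode_eq_of_hintikkaType_eq h
    simp only [TreeForm.Sat, FinRootedTree.interpTerm_eq_termVal]
    rw [mem_iff_atomCode_mem T.parent, mem_iff_atomCode_mem T'.parent, he]
  | not ψ ih => exact not_congr (ih hφ h)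
  | and ψ χ ihψ ihχ =>
    rw [TreeForm.depth, max_le_iff] at hφ
    exact and_congr (ihψ hφ.1 h) (ihχ hφ.2 h)
  | allV ψ ih =>
    obtain _ | j := j
    · exact absurd hφ (Nat.not_succ_le_zero _)
    exact forall_congr_of_range_eq (congrArg (·.2.1) h) fun _ _ hx =>
      ih (Nat.le_of_succ_le_succ hφ) hx
  | allS ψ ih =>
    obtain _ | j := j
    · exact absurd hφ (Nat.not_succ_le_zero _)
    exact forall_congr_of_range_eq (congrArg (·.2.2) h) fun _ _ hX =>
      ih (Nat.le_of_succ_le_succ hφ) hX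

end Transfer

lemma Nat.card_set (α : Type*) [Finite α] : Nat.card (Set α) = 2 ^ Nat.card α := by
  have := Fintype.ofFinite α
  simp only [Nat.card_eq_fintype_card, Fintype.card_set]

lemma card_atomCode (N m : ℕ) :
    Nat.card (AtomCode N m) = ∏ t : Fin N, (t + (N + 1) * 2 ^ m) := by
  simp

lemma card_atomCode_le (N m : ℕ) : Nat.card (AtomCode N m) ≤ 2 ^ ((N + m + 1) * N) := by
  have factor_le (t : Fin N) : (t : ℕ) + (N + 1) * 2 ^ m ≤ 2 ^ (N + m + 1) := by
    have := t.isLt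
    have : N < 2 ^ N := Nat.lt_two_pow_self
    have := Nat.one_le_two_pow (n := m)
    rw [pow_succ, pow_add]
    nlinarith
  calc Nat.card (AtomCode N m) ≤ ∏ _t : Fin N, 2 ^ (N + m + 1) :=
        card_atomCode N m ▸ Finset.prod_le_prod (fun _ _ => Nat.zero_le _) fun t _ => factor_le t
    _ = 2 ^ ((N + m + 1) * N) := by simp [pow_mul]

instance HintikkaType.finite : (j n m : ℕ) → Finite (HintikkaType j n m)
  | 0, n, m => inferInstanceAs (Finite (AtomCode (n + 1) m))
  | j + 1, n, m =>
    have := HintikkaType.finite j (n + 1) m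
    have := HintikkaType.finite j n (m + 1)
    inferInstanceAs (Finite (AtomCode (n + 1) m × Set _ × Set _))

lemma card_hintikkaType_succ (j n m : ℕ) :
    Nat.card (HintikkaType (j + 1) n m) = Nat.card (AtomCode (n + 1) m) *
      (2 ^ Nat.card (HintikkaType j (n + 1) m) * 2 ^ Nat.card (HintikkaType j n (m + 1))) := by
  simp only [HintikkaType, Nat.card_prod, Nat.card_set]

lemma two_mul_mul_two_pow_add_le {a E X t : ℕ} (ha : a ≤ 2 ^ E) (h : X + E + 2 ≤ t) :
    2 * (a * 2 ^ X) + E + 2 ≤ 2 ^ t := by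
  have hE : E + 2 ≤ 2 ^ (E + 1) := Nat.lt_two_pow_self
  have h1 : 2 * (a * 2 ^ X) ≤ 2 ^ (E + X + 1) := by
    rw [pow_succ, pow_add]
    nlinarith [Nat.one_le_two_pow (n := X)]
  have h2 : 2 ^ (E + 1) ≤ 2 ^ (E + X + 1) := Nat.pow_le_pow_right two_pos (by omega)
  calc 2 * (a * 2 ^ X) + E + 2 ≤ 2 ^ (E + X + 1) + 2 ^ (E + X + 1) := by omega
    _ = 2 ^ (E + X + 2) := by ring
    _ ≤ 2 ^ t := Nat.pow_le_pow_right two_pos (by omega)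

lemma card_atomCode_le_of_add_le {k n m : ℕ} (h : n + m ≤ k) :
    Nat.card (AtomCode (n + 1) m) ≤ 2 ^ ((k + 1) * (k + 2)) :=
  (card_atomCode_le (n + 1) m).trans <| Nat.pow_le_pow_right two_pos <| by
    rw [mul_comm]
    exact Nat.mul_le_mul (by omega) (by omega)

lemma card_atomCode_le_of_add_le_four {n m : ℕ} (h : n + m ≤ 4) :
    Nat.card (AtomCode (n + 1) m) ≤ 30240 := by
  rw [card_atomCode]
  have : n ≤ 4 := by omega
  have : m ≤ 4 - n := by omega
  interval_cases n <;> interval_cases m <;> norm_num [Fin.prod_univ_succ]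

lemma add_one_mul_add_two_add_two_le_two_pow {t : ℕ} (ht : 6 ≤ t) :
    (t + 1) * (t + 2) + 2 ≤ 2 ^ t := by
  induction t, ht using Nat.le_induction with
  | base => norm_num
  | succ t _ ih =>
    rw [pow_succ]
    nlinarith

lemma add_one_mul_add_two_add_two_le_tower {k : ℕ} (hk : 5 ≤ k) :
    (k + 1) * (k + 2) + 2 ≤ tower (1 + logStar k) := by
  have h16 : 16 ≤ tower (logStar k) := tower_strictMono.monotone (three_le_logStar hk)
  have hk' : k ≤ tower (logStar k) := logStar_le_iff.mp le_rfl
  calc (k + 1) * (k + 2) + 2 ≤ (tower (logStar k) + 1) * (tower (logStar k) + 2) + 2 := by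
        gcongr
    _ ≤ 2 ^ tower (logStar k) := add_one_mul_add_two_add_two_le_two_pow (by omega)
    _ = tower (1 + logStar k) := by rw [add_comm]; rfl

lemma two_mul_card_atomCode_add_le_tower {k n m : ℕ} (hk : 4 ≤ k) (h : n + m ≤ k) :
    2 * Nat.card (AtomCode (n + 1) m) + (k + 1) * (k + 2) + 2 ≤ tower (2 + logStar k) := by
  obtain rfl | hk5 := hk.eq_or_lt
  · have := card_atomCode_le_of_add_le_four h
    rw [logStar_four, show tower (2 + 2) = 65536 by decide]
    omega
  · have := two_mul_mul_two_pow_add_le (X := 0) (card_atomCode_le_of_add_le h)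
      ((zero_add _).trans_le (add_one_mul_add_two_add_two_le_tower hk5))
    rw [pow_zero, mul_one] at this
    rwa [show 2 + logStar k = 1 + logStar k + 1 by omega]

lemma two_mul_card_hintikkaType_add_le_tower {k : ℕ} (hk : 4 ≤ k) {j n m : ℕ}
    (h : j + n + m ≤ k) :
    2 * Nat.card (HintikkaType j n m) + (k + 1) * (k + 2) + 2 ≤ tower (j + 2 + logStar k) := by
  induction j generalizing n m with
  | zero =>
    rw [zero_add]
    exact two_mul_card_atomCode_add_le_tower hk (by omega)
  | succ j ih =>
    have hA := ih (n := n + 1) (m := m) (by omega)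
    have hB := ih (n := n) (m := m + 1) (by omega)
    rw [card_hintikkaType_succ, ← pow_add,
      show j + 1 + 2 + logStar k = j + 2 + logStar k + 1 by omega]
    exact two_mul_mul_two_pow_add_le (card_atomCode_le_of_add_le (by omega)) (by omega)

/-- for every integer `k ≥ 4`, the number of `≡ₖ^{MSO;tr}`-classes
of finite rooted trees is at most `tower (k + 2 + logStar k)`. -/
theorem mso_tree_classes_bound (k : ℕ) (hk : 4 ≤ k) :
    Finite (MSOTreeClasses k) ∧
      Nat.card (MSOTreeClasses k) ≤ tower (k + 2 + logStar k) := by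
  let τ : MSOTreeClasses k → HintikkaType k 0 0 := fun q =>
    hintikkaType k q.out Fin.elim0 Fin.elim0
  have hτ : Function.Injective τ := fun q q' h =>
    Quotient.out_equiv_out.mp fun φ hφ => φ.sat_iff_of_hintikkaType_eq hφ h
  refine ⟨Finite.of_injective τ hτ, ?_⟩
  have := Nat.card_le_card_of_injective τ hτ
  have := two_mul_card_hintikkaType_add_le_tower hk (j := k) (n := 0) (m := 0) (by omega)
  omega
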